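/- arXiv:2310.12043 — 4 statements merged into one kernel-verified Lean document; each statement's English description precedes it below -/
import Mathlib

section
/- Let S ⊆ ℝ be the attractor of an IFS {rx + a_i}_{i=1}^m (m ≥ 2, 0 < r < 1) satisfying the strong separation condition. Suppose there are real numbers t_1 < t_2 < ⋯ < t_m and α ∈ ℝ such that the sets S + t_1, …, S + t_m are pairwise disjoint, the sets (−S + α) + t_1, …, (−S + α) + t_m are pairwise disjoint, and ⋃_{i=1}^m (S + t_i) = ⋃_{i=1}^m ((−S + α) + t_i). Then S = −S + α. -/
/-- **Lemma 3.1 (Xiao).** Let `S ⊆ ℝ` be the attractor of a homogeneous IFS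
`{rx + a_i}_{i=1}^m` satisfying the strong separation condition. If there are
`t_1 < ⋯ < t_m` and `α ∈ ℝ` such that both `⋃ (S + t_i)` and `⋃ ((−S + α) + t_i)`
are disjoint unions and the two unions coincide, then `S = −S + α`. -/
theorem symmetric_of_translates
    (S : Set ℝ) (hSne : S.Nonempty) (hScpt : IsCompact S)
    (m : ℕ) (hm : 2 ≤ m)
    (r : ℝ) (hr0 : 0 < r) (hr1 : r < 1)
    (a : Fin m → ℝ)
    (hS : S = ⋃ i, (fun x => r * x + a i) '' S)
    (hSSC : Pairwise fun i j =>
      Disjoint ((fun x => r * x + a i) '' S) ((fun x => r * x + a j) '' S))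
    (t : Fin m → ℝ) (ht : StrictMono t) (α : ℝ)
    (hdisjS : Pairwise fun i j =>
      Disjoint ((fun x => x + t i) '' S) ((fun x => x + t j) '' S))
    (hdisjS' : Pairwise fun i j =>
      Disjoint ((fun x => (-x + α) + t i) '' S) ((fun x => (-x + α) + t j) '' S))
    (hunion : (⋃ i, (fun x => x + t i) '' S) = ⋃ i, (fun x => (-x + α) + t i) '' S) :
    S = (fun x => -x + α) '' S := by
  set T : Set ℝ := (fun x => -x + α) '' S with hTdef
  set D : Set ℝ := (S \ T) ∪ (T \ S) with hDdef
  -- It suffices to show D = ∅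
  suffices hD : D = ∅ by
    ext x
    constructor
    · intro hx
      by_contra hx'
      have : x ∈ D := Or.inl ⟨hx, hx'⟩
      rw [hD] at this; exact this
    · intro hx
      by_contra hx'
      have : x ∈ D := Or.inr ⟨hx, hx'⟩
      rw [hD] at this; exact this
  by_contra hDne
  have hDne' : D.Nonempty := Set.nonempty_iff_ne_empty.mpr hDne
  have hTcpt : IsCompact T := hScpt.image (continuous_neg.add continuous_const)
  have hbdd : BddAbove D := by
    apply BddAbove.mono (show D ⊆ S ∪ T by
      intro x hx; rcases hx with ⟨h, _⟩ | ⟨h, _⟩; exacts [Or.inl h, Or.inr h])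
    exact (hScpt.bddAbove).union hTcpt.bddAbove
  set c := sSup D with hc
  have hle : ∀ y ∈ D, y ≤ c := fun y hy => le_csSup hbdd hy
  set lst : Fin m := ⟨m - 1, by omega⟩ with hlst
  set sec : Fin m := ⟨m - 2, by omega⟩ with hsec
  have hseclst : sec < lst := by
    simp only [hsec, hlst, Fin.mk_lt_mk]; omega
  have hδ : 0 < t lst - t sec := by
    have := ht hseclst; linarith
  -- if i ≠ lst then t i ≤ t sec
  have hti : ∀ i : Fin m, i ≠ lst → t i ≤ t sec := by
    intro i hi
    apply ht.monotone
    have : (i : ℕ) < m := i.isLt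
    have : (i : ℕ) ≠ m - 1 := fun h => hi (Fin.ext h)
    simp only [hsec, Fin.le_def]; omega
  -- key step: every element of D is ≤ c - δ
  have key : ∀ y ∈ D, y ≤ c - (t lst - t sec) := by
    intro y hy
    by_contra hgt
    push_neg at hgt
    rcases hy with ⟨hyS, hyT⟩ | ⟨hyT, hyS⟩
    · -- y ∈ S \ T
      have h1 : y + t lst ∈ ⋃ i, (fun x => (-x + α) + t i) '' S := by
        rw [← hunion]
        exact Set.mem_iUnion.mpr ⟨lst, ⟨y, hyS, rfl⟩⟩
      obtain ⟨i, s, hsS, heq⟩ := Set.mem_iUnion.mp h1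
      simp only at heq
      by_cases hilst : i = lst
      · subst hilst
        exact hyT ⟨s, hsS, by show -s + α = y; linarith⟩
      · set z : ℝ := -s + α with hz
        have hzT : z ∈ T := ⟨s, hsS, rfl⟩
        have hzc : c < z := by
          have := hti i hilst
          have : y + (t lst - t sec) ≤ z := by simp only [hz]; linarith
          linarith
        have hzS : z ∈ S := by
          by_contra hzS
          have : z ∈ D := Or.inr ⟨hzT, hzS⟩
          exact absurd (hle z this) (not_le.mpr hzc)
        have hmem1 : y + t lst ∈ (fun x => x + t i) '' S :=
          ⟨z, hzS, by simp only [hz]; linarith⟩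
        have hmem2 : y + t lst ∈ (fun x => x + t lst) '' S := ⟨y, hyS, rfl⟩
        exact Set.disjoint_left.mp (hdisjS hilst) hmem1 hmem2
    · -- y ∈ T \ S
      have h1 : y + t lst ∈ ⋃ i, (fun x => x + t i) '' S := by
        rw [hunion]
        obtain ⟨s, hsS, hseq⟩ := hyT
        exact Set.mem_iUnion.mpr ⟨lst, ⟨s, hsS, by show -s + α + t lst = y + t lst; simp only at hseq; linarith⟩⟩
      obtain ⟨i, s, hsS, heq⟩ := Set.mem_iUnion.mp h1
      simp only at heq
      by_cases hilst : i = lst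
      · subst hilst
        have : s = y := by linarith
        subst this
        exact hyS hsS
      · set z : ℝ := s with hz
        have hzS : z ∈ S := hsS
        have hzc : c < z := by
          have := hti i hilst
          have : y + (t lst - t sec) ≤ z := by simp only [hz]; linarith
          linarith
        have hzT : z ∈ T := by
          by_contra hzT
          have : z ∈ D := Or.inl ⟨hzS, hzT⟩
          exact absurd (hle z this) (not_le.mpr hzc)
        obtain ⟨w, hwS, hweq⟩ := hzT
        have hmem1 : y + t lst ∈ (fun x => (-x + α) + t i) '' S :=
          ⟨w, hwS, by show -w + α + t i = y + t lst; simp only at hweq; linarith⟩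
        have hmem2 : y + t lst ∈ (fun x => (-x + α) + t lst) '' S := by
          obtain ⟨s', hs'S, hs'eq⟩ := hyT
          exact ⟨s', hs'S, by show -s' + α + t lst = y + t lst; simp only at hs'eq; linarith⟩
        exact Set.disjoint_left.mp (hdisjS' hilst) hmem1 hmem2
  have : c ≤ c - (t lst - t sec) := csSup_le hDne' key
  linarith
end

section
/- Let K ⊆ ℝ² be the attractor of the IFS {φ_1, …, φ_9} where φ_1(x) = x/6 + (−15/8, 15/8), φ_2(x) = x/6 + (−5/2, −5/4), φ_3(x) = (1/6)R_{3π/2}x + (−5/4, −5/4), φ_4(x) = (1/6)R_{π/2}x + (−5/2, −5/2), φ_5(x) = (1/6)R_π x + (−5/4, −5/2), φ_6(x) = x/6 + (5/4, −5/4), φ_7(x) = (1/6)R_{3π/2}x + (5/2, −5/4), φ_8(x) = (1/6)R_{π/2}x + (5/4, −5/2), φ_9(x) = (1/6)R_π x + (5/2, −5/2). Then K ⊆ [−3, 3]² and the sets φ_1(K), …, φ_9(K) are pairwise disjoint (i.e., the IFS satisfies the strong separation condition). -/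
open Real

/-- Rotation of `ℝ²` by angle `θ` counterclockwise about the origin. -/
noncomputable def rot2 (θ : ℝ) (p : ℝ × ℝ) : ℝ × ℝ :=
  (Real.cos θ * p.1 - Real.sin θ * p.2, Real.sin θ * p.1 + Real.cos θ * p.2)

/-- The nine similitudes `φ_1, …, φ_9` of Example 2.6 (indexed by `0, …, 8`). -/
noncomputable def exPhi : Fin 9 → ℝ × ℝ → ℝ × ℝ :=
  ![fun p => (1/6 : ℝ) • p + (-(15/8 : ℝ), (15/8 : ℝ)),
    fun p => (1/6 : ℝ) • p + (-(5/2 : ℝ), -(5/4 : ℝ)),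
    fun p => (1/6 : ℝ) • rot2 (3*π/2) p + (-(5/4 : ℝ), -(5/4 : ℝ)),
    fun p => (1/6 : ℝ) • rot2 (π/2) p + (-(5/2 : ℝ), -(5/2 : ℝ)),
    fun p => (1/6 : ℝ) • rot2 π p + (-(5/4 : ℝ), -(5/2 : ℝ)),
    fun p => (1/6 : ℝ) • p + ((5/4 : ℝ), -(5/4 : ℝ)),
    fun p => (1/6 : ℝ) • rot2 (3*π/2) p + ((5/2 : ℝ), -(5/4 : ℝ)),
    fun p => (1/6 : ℝ) • rot2 (π/2) p + ((5/4 : ℝ), -(5/2 : ℝ)),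
    fun p => (1/6 : ℝ) • rot2 π p + ((5/2 : ℝ), -(5/2 : ℝ))]

/-- The similitude `f(x) = x/6 + (15/8, −15/8)` of Example 2.6. -/
noncomputable def exF : ℝ × ℝ → ℝ × ℝ :=
  fun p => (1/6 : ℝ) • p + ((15/8 : ℝ), -(15/8 : ℝ))

lemma cos3pi2 : Real.cos (3*π/2) = 0 := by
  rw [show (3*π/2 : ℝ) = π + π/2 by ring, Real.cos_add]; simp

lemma sin3pi2 : Real.sin (3*π/2) = -1 := by
  rw [show (3*π/2 : ℝ) = π + π/2 by ring, Real.sin_add]; simp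

/-- centers (x-coordinates) of the nine small squares -/
noncomputable def cX : Fin 9 → ℝ := ![-(15/8), -(5/2), -(5/4), -(5/2), -(5/4), 5/4, 5/2, 5/4, 5/2]
/-- centers (y-coordinates) of the nine small squares -/
noncomputable def cY : Fin 9 → ℝ := ![15/8, -(5/4), -(5/4), -(5/2), -(5/2), -(5/4), -(5/4), -(5/2), -(5/2)]

lemma exPhi_mk0 : exPhi ⟨0, by norm_num⟩ = fun p => (1/6 : ℝ) • p + (-(15/8 : ℝ), (15/8 : ℝ)) := rfl
lemma exPhi_n0 : exPhi 0 = fun p => (1/6 : ℝ) • p + (-(15/8 : ℝ), (15/8 : ℝ)) := rfl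
lemma exPhi_mk1 : exPhi ⟨1, by norm_num⟩ = fun p => (1/6 : ℝ) • p + (-(5/2 : ℝ), -(5/4 : ℝ)) := rfl
lemma exPhi_n1 : exPhi 1 = fun p => (1/6 : ℝ) • p + (-(5/2 : ℝ), -(5/4 : ℝ)) := rfl
lemma exPhi_mk2 : exPhi ⟨2, by norm_num⟩ = fun p => (1/6 : ℝ) • rot2 (3*π/2) p + (-(5/4 : ℝ), -(5/4 : ℝ)) := rfl
lemma exPhi_n2 : exPhi 2 = fun p => (1/6 : ℝ) • rot2 (3*π/2) p + (-(5/4 : ℝ), -(5/4 : ℝ)) := rfl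
lemma exPhi_mk3 : exPhi ⟨3, by norm_num⟩ = fun p => (1/6 : ℝ) • rot2 (π/2) p + (-(5/2 : ℝ), -(5/2 : ℝ)) := rfl
lemma exPhi_n3 : exPhi 3 = fun p => (1/6 : ℝ) • rot2 (π/2) p + (-(5/2 : ℝ), -(5/2 : ℝ)) := rfl
lemma exPhi_mk4 : exPhi ⟨4, by norm_num⟩ = fun p => (1/6 : ℝ) • rot2 π p + (-(5/4 : ℝ), -(5/2 : ℝ)) := rfl
lemma exPhi_n4 : exPhi 4 = fun p => (1/6 : ℝ) • rot2 π p + (-(5/4 : ℝ), -(5/2 : ℝ)) := rfl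
lemma exPhi_mk5 : exPhi ⟨5, by norm_num⟩ = fun p => (1/6 : ℝ) • p + ((5/4 : ℝ), -(5/4 : ℝ)) := rfl
lemma exPhi_n5 : exPhi 5 = fun p => (1/6 : ℝ) • p + ((5/4 : ℝ), -(5/4 : ℝ)) := rfl
lemma exPhi_mk6 : exPhi ⟨6, by norm_num⟩ = fun p => (1/6 : ℝ) • rot2 (3*π/2) p + ((5/2 : ℝ), -(5/4 : ℝ)) := rfl
lemma exPhi_n6 : exPhi 6 = fun p => (1/6 : ℝ) • rot2 (3*π/2) p + ((5/2 : ℝ), -(5/4 : ℝ)) := rfl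
lemma exPhi_mk7 : exPhi ⟨7, by norm_num⟩ = fun p => (1/6 : ℝ) • rot2 (π/2) p + ((5/4 : ℝ), -(5/2 : ℝ)) := rfl
lemma exPhi_n7 : exPhi 7 = fun p => (1/6 : ℝ) • rot2 (π/2) p + ((5/4 : ℝ), -(5/2 : ℝ)) := rfl
lemma exPhi_mk8 : exPhi ⟨8, by norm_num⟩ = fun p => (1/6 : ℝ) • rot2 π p + ((5/2 : ℝ), -(5/2 : ℝ)) := rfl
lemma exPhi_n8 : exPhi 8 = fun p => (1/6 : ℝ) • rot2 π p + ((5/2 : ℝ), -(5/2 : ℝ)) := rfl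
lemma cX_mk0 : cX ⟨0, by norm_num⟩ = -(15/8) := rfl
lemma cX_n0 : cX 0 = -(15/8) := rfl
lemma cY_mk0 : cY ⟨0, by norm_num⟩ = 15/8 := rfl
lemma cY_n0 : cY 0 = 15/8 := rfl
lemma cX_mk1 : cX ⟨1, by norm_num⟩ = -(5/2) := rfl
lemma cX_n1 : cX 1 = -(5/2) := rfl
lemma cY_mk1 : cY ⟨1, by norm_num⟩ = -(5/4) := rfl
lemma cY_n1 : cY 1 = -(5/4) := rfl
lemma cX_mk2 : cX ⟨2, by norm_num⟩ = -(5/4) := rfl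
lemma cX_n2 : cX 2 = -(5/4) := rfl
lemma cY_mk2 : cY ⟨2, by norm_num⟩ = -(5/4) := rfl
lemma cY_n2 : cY 2 = -(5/4) := rfl
lemma cX_mk3 : cX ⟨3, by norm_num⟩ = -(5/2) := rfl
lemma cX_n3 : cX 3 = -(5/2) := rfl
lemma cY_mk3 : cY ⟨3, by norm_num⟩ = -(5/2) := rfl
lemma cY_n3 : cY 3 = -(5/2) := rfl
lemma cX_mk4 : cX ⟨4, by norm_num⟩ = -(5/4) := rfl
lemma cX_n4 : cX 4 = -(5/4) := rfl
lemma cY_mk4 : cY ⟨4, by norm_num⟩ = -(5/2) := rfl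
lemma cY_n4 : cY 4 = -(5/2) := rfl
lemma cX_mk5 : cX ⟨5, by norm_num⟩ = 5/4 := rfl
lemma cX_n5 : cX 5 = 5/4 := rfl
lemma cY_mk5 : cY ⟨5, by norm_num⟩ = -(5/4) := rfl
lemma cY_n5 : cY 5 = -(5/4) := rfl
lemma cX_mk6 : cX ⟨6, by norm_num⟩ = 5/2 := rfl
lemma cX_n6 : cX 6 = 5/2 := rfl
lemma cY_mk6 : cY ⟨6, by norm_num⟩ = -(5/4) := rfl
lemma cY_n6 : cY 6 = -(5/4) := rfl
lemma cX_mk7 : cX ⟨7, by norm_num⟩ = 5/4 := rfl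
lemma cX_n7 : cX 7 = 5/4 := rfl
lemma cY_mk7 : cY ⟨7, by norm_num⟩ = -(5/2) := rfl
lemma cY_n7 : cY 7 = -(5/2) := rfl
lemma cX_mk8 : cX ⟨8, by norm_num⟩ = 5/2 := rfl
lemma cX_n8 : cX 8 = 5/2 := rfl
lemma cY_mk8 : cY ⟨8, by norm_num⟩ = -(5/2) := rfl
lemma cY_n8 : cY 8 = -(5/2) := rfl

lemma keyCenter (i : Fin 9) (p : ℝ × ℝ) :
    |(exPhi i p).1 - cX i| ≤ 1/6 * max |p.1| |p.2| ∧
    |(exPhi i p).2 - cY i| ≤ 1/6 * max |p.1| |p.2| := by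
  have h1 := abs_le.mp (le_max_left |p.1| |p.2|)
  have h2 := abs_le.mp (le_max_right |p.1| |p.2|)
  fin_cases i <;>
    simp [exPhi_mk0, exPhi_n0, exPhi_mk1, exPhi_n1, exPhi_mk2, exPhi_n2, exPhi_mk3, exPhi_n3, exPhi_mk4, exPhi_n4, exPhi_mk5, exPhi_n5, exPhi_mk6, exPhi_n6, exPhi_mk7, exPhi_n7, exPhi_mk8, exPhi_n8, cX_mk0, cX_n0, cY_mk0, cY_n0, cX_mk1, cX_n1, cY_mk1, cY_n1, cX_mk2, cX_n2, cY_mk2, cY_n2, cX_mk3, cX_n3, cY_mk3, cY_n3, cX_mk4, cX_n4, cY_mk4, cY_n4, cX_mk5, cX_n5, cY_mk5, cY_n5, cX_mk6, cX_n6, cY_mk6, cY_n6, cX_mk7, cX_n7, cY_mk7, cY_n7, cX_mk8, cX_n8, cY_mk8, cY_n8, rot2, cos3pi2, sin3pi2] <;>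
    constructor <;> rw [abs_le] <;> constructor <;> linarith [h1.1, h1.2, h2.1, h2.2]

lemma keyNorm (i : Fin 9) (p : ℝ × ℝ) :
    max |(exPhi i p).1| |(exPhi i p).2| ≤ 1/6 * max |p.1| |p.2| + 5/2 := by
  obtain ⟨ha, hb⟩ := keyCenter i p
  have hc : |cX i| ≤ 5/2 ∧ |cY i| ≤ 5/2 := by
    fin_cases i <;> simp [cX_mk0, cX_n0, cY_mk0, cY_n0, cX_mk1, cX_n1, cY_mk1, cY_n1, cX_mk2, cX_n2, cY_mk2, cY_n2, cX_mk3, cX_n3, cY_mk3, cY_n3, cX_mk4, cX_n4, cY_mk4, cY_n4, cX_mk5, cX_n5, cY_mk5, cY_n5, cX_mk6, cX_n6, cY_mk6, cY_n6, cX_mk7, cX_n7, cY_mk7, cY_n7, cX_mk8, cX_n8, cY_mk8, cY_n8, abs_le] <;> norm_num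
  have t1 : |(exPhi i p).1| ≤ |(exPhi i p).1 - cX i| + |cX i| := by
    calc |(exPhi i p).1| = |((exPhi i p).1 - cX i) + cX i| := by ring_nf
    _ ≤ _ := abs_add_le _ _
  have t2 : |(exPhi i p).2| ≤ |(exPhi i p).2 - cY i| + |cY i| := by
    calc |(exPhi i p).2| = |((exPhi i p).2 - cY i) + cY i| := by ring_nf
    _ ≤ _ := abs_add_le _ _
  exact max_le (by linarith [hc.1]) (by linarith [hc.2])

lemma centers_far (i j : Fin 9) (hij : i ≠ j) :
    1 < |cX i - cX j| ∨ 1 < |cY i - cY j| := by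
  fin_cases i <;> fin_cases j <;>
    first
      | exact absurd rfl hij
      | norm_num [cX_mk0, cX_n0, cY_mk0, cY_n0, cX_mk1, cX_n1, cY_mk1, cY_n1, cX_mk2, cX_n2, cY_mk2, cY_n2, cX_mk3, cX_n3, cY_mk3, cY_n3, cX_mk4, cX_n4, cY_mk4, cY_n4, cX_mk5, cX_n5, cY_mk5, cY_n5, cX_mk6, cX_n6, cY_mk6, cY_n6, cX_mk7, cX_n7, cY_mk7, cY_n7, cX_mk8, cX_n8, cY_mk8, cY_n8, lt_abs]

/-- **Example 2.6 (Xiao), separation.** The attractor `K` of the IFS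
`{φ_1, …, φ_9}` is contained in `[−3,3]²` and the IFS satisfies the strong
separation condition. -/
theorem example_IFS_strong_separation
    (K : Set (ℝ × ℝ)) (hKne : K.Nonempty) (hKcpt : IsCompact K)
    (hK : K = ⋃ i, exPhi i '' K) :
    K ⊆ Set.Icc ((-3, -3) : ℝ × ℝ) (3, 3) ∧
    Pairwise fun i j => Disjoint (exPhi i '' K) (exPhi j '' K) := by
  have hgc : Continuous fun p : ℝ × ℝ => max |p.1| |p.2| :=
    (continuous_fst.abs).max (continuous_snd.abs)
  obtain ⟨p₀, hp₀K, hmax⟩ := hKcpt.exists_isMaxOn hKne hgc.continuousOn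
  have hp₀' : p₀ ∈ ⋃ i, exPhi i '' K := hK ▸ hp₀K
  rw [Set.mem_iUnion] at hp₀'
  obtain ⟨i, q, hq, hpq⟩ := hp₀'
  have h3 : max |p₀.1| |p₀.2| ≤ 3 := by
    have h := keyNorm i q
    rw [hpq] at h
    have h' : max |q.1| |q.2| ≤ max |p₀.1| |p₀.2| := hmax hq
    linarith
  have hbox : ∀ p ∈ K, max |p.1| |p.2| ≤ 3 := fun p hp => le_trans (hmax hp) h3
  have hcent : ∀ i : Fin 9, ∀ a ∈ exPhi i '' K,
      |a.1 - cX i| ≤ 1/2 ∧ |a.2 - cY i| ≤ 1/2 := by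
    rintro i a ⟨q, hqK, rfl⟩
    obtain ⟨ha, hb⟩ := keyCenter i q
    have h3q := hbox q hqK
    exact ⟨by linarith, by linarith⟩
  constructor
  · intro p hp
    have h := hbox p hp
    have h1 := abs_le.mp (le_trans (le_max_left _ _) h)
    have h2 := abs_le.mp (le_trans (le_max_right _ _) h)
    exact ⟨⟨h1.1, h2.1⟩, ⟨h1.2, h2.2⟩⟩
  · intro i j hij
    rw [Set.disjoint_left]
    intro a hai haj
    obtain ⟨hx1, hy1⟩ := hcent i a hai
    obtain ⟨hx2, hy2⟩ := hcent j a haj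
    rw [abs_le] at hx1 hy1 hx2 hy2
    have hx : |cX i - cX j| ≤ 1 := by
      rw [abs_le]; constructor <;> linarith [hx1.1, hx1.2, hx2.1, hx2.2]
    have hy : |cY i - cY j| ≤ 1 := by
      rw [abs_le]; constructor <;> linarith [hy1.1, hy1.2, hy2.1, hy2.2]
    rcases centers_far i j hij with h | h <;> linarith
end

section
/- Let K ⊆ ℝ² be the attractor of the IFS {φ_1, …, φ_9} where φ_1(x) = x/6 + (−15/8, 15/8), φ_2(x) = x/6 + (−5/2, −5/4), φ_3(x) = (1/6)R_{3π/2}x + (−5/4, −5/4), φ_4(x) = (1/6)R_{π/2}x + (−5/2, −5/2), φ_5(x) = (1/6)R_π x + (−5/4, −5/2), φ_6(x) = x/6 + (5/4, −5/4), φ_7(x) = (1/6)R_{3π/2}x + (5/2, −5/4), φ_8(x) = (1/6)R_{π/2}x + (5/4, −5/2), φ_9(x) = (1/6)R_π x + (5/2, −5/2). Let f(x) = x/6 + (15/8, −15/8). Then f(K) ⊆ K. -/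
open Real

/-!
Writing `φ_1, …, φ_9` for the maps of the IFS, `f ∘ φ_1 = φ_6 ∘ f`, while for `i ≥ 2` the map
`f ∘ φ_i` is a composite `φ_j ∘ φ_k` and hence sends `K` into `K`. Let `x₀ ∈ K` maximise the
distance `d` from `f x` to `K`, and write `x₀ = φ_i y` with `y ∈ K`. Either `f x₀ ∈ K`, or
`d = dist(φ_6 (f y), K) ≤ dist(f y, K) / 6 ≤ d / 6`; in both cases `d = 0`.
-/

open Set Metric NNReal

section Contraction

variable {X : Type*} [MetricSpace X] {K : Set X}

theorem LipschitzWith.infDist_le_of_mapsTo (hKc : IsCompact K) (hKne : K.Nonempty) {g : X → X}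
    {c : ℝ≥0} (hg : LipschitzWith c g) (hgK : MapsTo g K K) (y : X) :
    infDist (g y) K ≤ c * infDist y K := by
  obtain ⟨q, hq, hyq⟩ := hKc.exists_infDist_eq_dist hKne y
  calc infDist (g y) K ≤ dist (g y) (g q) := infDist_le_dist_of_mem (hgK hq)
    _ ≤ c * dist y q := hg.dist_le_mul y q
    _ = c * infDist y K := by rw [hyq]

theorem mapsTo_of_comp_mapsTo_or_semiconj_contraction {ι : Type*} (hKc : IsCompact K)
    (hKne : K.Nonempty) {φ : ι → X → X} (hcover : K ⊆ ⋃ i, φ i '' K) {f : X → X}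
    (hf : ContinuousOn f K)
    (hstep : ∀ i, MapsTo (f ∘ φ i) K K ∨ ∃ (g : X → X) (c : ℝ≥0), c < 1 ∧ LipschitzWith c g ∧
      MapsTo g K K ∧ ∀ x ∈ K, f (φ i x) = g (f x)) :
    MapsTo f K K := by
  obtain ⟨x₀, hx₀, hmax⟩ :=
    hKc.exists_isMaxOn hKne ((continuous_infDist_pt K).comp_continuousOn hf)
  have hmax_le : infDist (f x₀) K ≤ 0 := by
    obtain ⟨i, y, hy, rfl⟩ := mem_iUnion.1 (hcover hx₀)
    rcases hstep i with hmaps | ⟨g, c, hc, hg, hgK, hsemi⟩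
    · exact (infDist_zero_of_mem (hmaps hy)).le
    · have hcontract : infDist (f (φ i y)) K ≤ c * infDist (f (φ i y)) K :=
        calc infDist (f (φ i y)) K = infDist (g (f y)) K := by rw [hsemi y hy]
          _ ≤ c * infDist (f y) K := hg.infDist_le_of_mapsTo hKc hKne hgK _
          _ ≤ c * infDist (f (φ i y)) K := by gcongr; exact hmax hy
      nlinarith [(infDist_nonneg : 0 ≤ infDist (f (φ i y)) K), (NNReal.coe_lt_coe.2 hc)]
  intro x hx
  rw [hKc.isClosed.mem_iff_infDist_zero hKne]
  exact le_antisymm ((hmax hx).trans hmax_le) infDist_nonneg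

end Contraction

@[simp]
lemma rot2_pi_div_two (p : ℝ × ℝ) : rot2 (π/2) p = (-p.2, p.1) := by
  simp [rot2]

@[simp]
lemma rot2_pi (p : ℝ × ℝ) : rot2 π p = (-p.1, -p.2) := by
  simp [rot2]

@[simp]
lemma rot2_three_pi_div_two (p : ℝ × ℝ) : rot2 (3*π/2) p = (p.2, -p.1) := by
  have h : 3*π/2 = π/2 + π := by ring
  simp [rot2, h, cos_add, sin_add]

lemma exF_comp_exPhi_zero : exF ∘ exPhi 0 = exPhi 5 ∘ exF := by
  ext p <;> simp [exF, exPhi] <;> ring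

lemma exF_comp_exPhi_of_ne_zero (i : Fin 9) (hi : i ≠ 0) :
    ∃ j k, exF ∘ exPhi i = exPhi j ∘ exPhi k := by
  fin_cases i
  · exact absurd rfl hi
  · exact ⟨7, 6, by ext p <;> simp [exF, exPhi] <;> ring⟩
  · exact ⟨7, 8, by ext p <;> simp [exF, exPhi] <;> ring⟩
  · exact ⟨7, 5, by ext p <;> simp [exF, exPhi] <;> ring⟩
  · exact ⟨7, 7, by ext p <;> simp [exF, exPhi] <;> ring⟩
  · exact ⟨8, 8, by ext p <;> simp [exF, exPhi] <;> ring⟩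
  · exact ⟨8, 7, by ext p <;> simp [exF, exPhi] <;> ring⟩
  · exact ⟨8, 6, by ext p <;> simp [exF, exPhi] <;> ring⟩
  · exact ⟨8, 5, by ext p <;> simp [exF, exPhi] <;> ring⟩

lemma lipschitzWith_exPhi_five : LipschitzWith 6⁻¹ (exPhi 5) :=
  LipschitzWith.of_dist_le_mul fun p q => by
    simp [exPhi, dist_smul₀]

lemma continuous_exF : Continuous exF := by
  unfold exF; fun_prop

/-- **Example 2.6 (Xiao), self-embedding.** For the attractor `K` of the IFS
`{φ_1, …, φ_9}` and `f(x) = x/6 + (15/8, −15/8)`, one has `f(K) ⊆ K`. -/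
theorem example_selfEmbedding
    (K : Set (ℝ × ℝ)) (hKne : K.Nonempty) (hKcpt : IsCompact K)
    (hK : K = ⋃ i, exPhi i '' K) :
    exF '' K ⊆ K := by
  have hmaps (i : Fin 9) : MapsTo (exPhi i) K K := fun x hx => hK ▸ mem_iUnion.2 ⟨i, x, hx, rfl⟩
  refine MapsTo.image_subset <| mapsTo_of_comp_mapsTo_or_semiconj_contraction hKcpt hKne
    hK.subset continuous_exF.continuousOn fun i => ?_
  by_cases hi : i = 0
  · subst hi
    exact Or.inr ⟨exPhi 5, 6⁻¹, by norm_num, lipschitzWith_exPhi_five, hmaps 5,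
      fun x _ => congrFun exF_comp_exPhi_zero x⟩
  · obtain ⟨j, k, hjk⟩ := exF_comp_exPhi_of_ne_zero i hi
    exact Or.inl (hjk ▸ (hmaps j).comp (hmaps k))
end

section
/- Let A, B ⊆ ℝ, let m ≥ 1, and let t_1 < t_2 < ⋯ < t_m be real numbers such that the sets A + t_1, …, A + t_m are pairwise disjoint, the sets B + t_1, …, B + t_m are pairwise disjoint, and ⋃_{i=1}^m (A + t_i) = ⋃_{i=1}^m (B + t_i). Then ⋃_{i=1}^m ((A \ B) + t_i) = ⋃_{i=1}^m ((B \ A) + t_i). -/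
lemma aux_union_diff_sub
    (A B : Set ℝ) (m : ℕ) (t : Fin m → ℝ)
    (hdisjA : Pairwise fun i j =>
      Disjoint ((fun x => x + t i) '' A) ((fun x => x + t j) '' A))
    (hsub : (⋃ i, (fun x => x + t i) '' A) ⊆ ⋃ i, (fun x => x + t i) '' B) :
    (⋃ i, (fun x => x + t i) '' (A \ B)) ⊆ ⋃ i, (fun x => x + t i) '' (B \ A) := by
  rintro x hx
  simp only [Set.mem_iUnion, Set.mem_image] at hx ⊢
  obtain ⟨i, a, ⟨haA, haB⟩, rfl⟩ := hx
  have hmem := hsub (Set.mem_iUnion.mpr ⟨i, ⟨a, haA, rfl⟩⟩)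
  simp only [Set.mem_iUnion, Set.mem_image] at hmem
  obtain ⟨j, b, hbB, hx⟩ := hmem
  refine ⟨j, b, ⟨hbB, fun hbA => ?_⟩, hx⟩
  by_cases hij : i = j
  · subst hij
    have : b = a := by linarith
    exact haB (this ▸ hbB)
  · exact Set.disjoint_left.mp (hdisjA hij) ⟨a, haA, rfl⟩ ⟨b, hbA, hx⟩

/-- **Equation (3.1) in Lemma 3.1 (Xiao).** If `A + t_1, …, A + t_m` are pairwise
disjoint, `B + t_1, …, B + t_m` are pairwise disjoint, and
`⋃ (A + t_i) = ⋃ (B + t_i)`, then `⋃ ((A \ B) + t_i) = ⋃ ((B \ A) + t_i)`. -/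
theorem union_diff_translates_eq
    (A B : Set ℝ) (m : ℕ) (hm : 1 ≤ m)
    (t : Fin m → ℝ) (ht : StrictMono t)
    (hdisjA : Pairwise fun i j =>
      Disjoint ((fun x => x + t i) '' A) ((fun x => x + t j) '' A))
    (hdisjB : Pairwise fun i j =>
      Disjoint ((fun x => x + t i) '' B) ((fun x => x + t j) '' B))
    (hunion : (⋃ i, (fun x => x + t i) '' A) = ⋃ i, (fun x => x + t i) '' B) :
    (⋃ i, (fun x => x + t i) '' (A \ B)) = ⋃ i, (fun x => x + t i) '' (B \ A) :=
  le_antisymm (aux_union_diff_sub A B m t hdisjA hunion.le)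
    (aux_union_diff_sub B A m t hdisjB hunion.ge)
end
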